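/- arXiv:2010.13964 — 2 statements merged into one kernel-verified Lean document; each statement's English description precedes it below -/
import Mathlib

section
/- Given any finite positive measure μ on S¹ with total mass 2π and ∫_{S¹} e^{iθ}dμ(θ) = 0, the curve c(θ) = ∫₀^θ exp(i F_μ^{(-1)}(s)) ds, where F_μ^{(-1)} is the generalized inverse of the cumulative distribution function F_μ(θ) = μ([0,θ]), is a closed Lipschitz curve (c(2π) = c(0)) with |c'(θ)| = 1 a.e. whose length measure equals μ. -/
open MeasureTheory Real

/-- The Gauss map of a planar curve: the unit tangent direction. -/
noncomputable def gaussMap (c : ℝ → ℂ) (θ : ℝ) : ℂ :=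
  deriv c θ / (‖deriv c θ‖ : ℂ)

/-- The length measure of a curve `c` parametrized on `[0, 2π]`. -/
noncomputable def lengthMeasure (c : ℝ → ℂ) : Measure ℂ :=
  Measure.map (gaussMap c)
    ((volume.restrict (Set.Icc 0 (2 * π))).withDensity fun θ => ENNReal.ofReal ‖deriv c θ‖)

/-- The cumulative distribution function `F_μ(θ) = μ([0,θ])` of a measure on `[0,2π)`. -/
noncomputable def cdf (μ : Measure ℝ) (θ : ℝ) : ℝ := (μ (Set.Icc 0 θ)).toReal

/-- The generalized inverse `F_μ^{(-1)}(s) = inf {θ ∈ [0,2π] : F_μ(θ) ≥ s}`. -/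
noncomputable def cdfInv (μ : Measure ℝ) (s : ℝ) : ℝ :=
  sInf {θ | θ ∈ Set.Icc 0 (2 * π) ∧ s ≤ cdf μ θ}

/-- The curve reconstructed from the generalized inverse of the c.d.f. -/
noncomputable def curveOf (μ : Measure ℝ) (θ : ℝ) : ℂ :=
  ∫ s in (0 : ℝ)..θ, Complex.exp ((cdfInv μ s : ℂ) * Complex.I)

section Aux

open Set Filter Topology

variable (μ : Measure ℝ) [IsFiniteMeasure μ]

lemma two_pi_nn : (0:ℝ) ≤ 2 * π := by positivity

lemma cdf_nonneg (θ : ℝ) : 0 ≤ cdf μ θ := ENNReal.toReal_nonneg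

lemma cdf_mono : Monotone (cdf μ) := fun a b hab =>
  ENNReal.toReal_mono (measure_ne_top μ _) (measure_mono (Icc_subset_Icc le_rfl hab))

lemma cdf_le (hmass : μ Set.univ = ENNReal.ofReal (2 * π)) (θ : ℝ) : cdf μ θ ≤ 2 * π := by
  have h : cdf μ θ ≤ (μ Set.univ).toReal :=
    ENNReal.toReal_mono (measure_ne_top μ _) (measure_mono (subset_univ _))
  rwa [hmass, ENNReal.toReal_ofReal (two_pi_nn)] at h

lemma meas_Icc_two_pi (hsupp : μ (Set.Ico 0 (2 * π))ᶜ = 0)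
    (hmass : μ Set.univ = ENNReal.ofReal (2 * π)) :
    μ (Icc 0 (2 * π)) = ENNReal.ofReal (2 * π) := by
  refine le_antisymm (hmass ▸ measure_mono (subset_univ _)) ?_
  have h1 : μ Set.univ ≤ μ (Icc 0 (2 * π) ∪ (Ico 0 (2 * π))ᶜ) := by
    refine measure_mono fun x _ => ?_
    by_cases hx : x ∈ Ico 0 (2 * π)
    · exact Or.inl (Ico_subset_Icc_self hx)
    · exact Or.inr hx
  calc ENNReal.ofReal (2 * π) = μ Set.univ := hmass.symm
    _ ≤ μ (Icc 0 (2 * π) ∪ (Ico 0 (2 * π))ᶜ) := h1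
    _ ≤ μ (Icc 0 (2 * π)) + μ (Ico 0 (2 * π))ᶜ := measure_union_le _ _
    _ = μ (Icc 0 (2 * π)) := by rw [hsupp, add_zero]

lemma cdf_two_pi (hsupp : μ (Set.Ico 0 (2 * π))ᶜ = 0)
    (hmass : μ Set.univ = ENNReal.ofReal (2 * π)) : cdf μ (2 * π) = 2 * π := by
  rw [cdf, meas_Icc_two_pi μ hsupp hmass, ENNReal.toReal_ofReal (two_pi_nn)]

/-- Right continuity of the cdf, in the form we need. -/
lemma le_cdf_of_forall {a s : ℝ} (h : ∀ ε > (0:ℝ), s ≤ cdf μ (a + ε)) : s ≤ cdf μ a := by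
  have hseq : Tendsto (fun n : ℕ => μ (Icc 0 (a + 1/(n+1)))) atTop
      (𝓝 (μ (⋂ n : ℕ, Icc 0 (a + 1/(n+1))))) := by
    refine tendsto_measure_iInter_atTop (fun n => measurableSet_Icc.nullMeasurableSet) ?_
      ⟨0, measure_ne_top μ _⟩
    intro m n hmn
    have h1 : (1:ℝ)/(n+1) ≤ 1/(m+1) :=
      one_div_le_one_div_of_le (by positivity) (by exact_mod_cast Nat.succ_le_succ hmn)
    exact Icc_subset_Icc le_rfl (add_le_add le_rfl h1)
  have hiInter : (⋂ n : ℕ, Icc 0 (a + 1/(n+1))) = Icc 0 a := by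
    ext x
    simp only [mem_iInter, mem_Icc]
    constructor
    · intro hx
      refine ⟨(hx 0).1, le_of_forall_pos_le_add fun ε hε => ?_⟩
      obtain ⟨n, hn⟩ := exists_nat_one_div_lt hε
      exact le_trans (hx n).2 (add_le_add le_rfl hn.le)
    · intro hx n
      have hp : (0:ℝ) ≤ 1/(n+1) := by positivity
      exact ⟨hx.1, hx.2.trans (le_add_of_nonneg_right hp)⟩
  rw [hiInter] at hseq
  have htr : Tendsto (fun n : ℕ => cdf μ (a + 1/(n+1))) atTop (𝓝 (cdf μ a)) :=
    (ENNReal.tendsto_toReal (measure_ne_top μ _)).comp hseq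
  exact ge_of_tendsto' htr fun n => h _ (by positivity)

lemma cdfInv_nonneg (hsupp : μ (Set.Ico 0 (2 * π))ᶜ = 0)
    (hmass : μ Set.univ = ENNReal.ofReal (2 * π)) (s : ℝ) : 0 ≤ cdfInv μ s := by
  rcases le_or_gt s (2 * π) with hs | hs
  · rw [cdfInv]
    exact le_csInf ⟨2 * π, ⟨two_pi_nn, le_rfl⟩, hs.trans_eq (cdf_two_pi μ hsupp hmass).symm⟩
      fun θ hθ => hθ.1.1
  · have : {θ | θ ∈ Icc 0 (2 * π) ∧ s ≤ cdf μ θ} = ∅ := by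
      ext θ; simp only [mem_setOf_eq, mem_empty_iff_false, iff_false, not_and]
      intro _
      exact not_le.2 (lt_of_le_of_lt (cdf_le μ hmass θ) hs)
    rw [cdfInv, this, Real.sInf_empty]

lemma cdfInv_le_two_pi (hsupp : μ (Set.Ico 0 (2 * π))ᶜ = 0)
    (hmass : μ Set.univ = ENNReal.ofReal (2 * π)) {s : ℝ} (hs : s ≤ 2 * π) :
    cdfInv μ s ≤ 2 * π := by
  rw [cdfInv]
  exact csInf_le ⟨0, fun θ hθ => hθ.1.1⟩ ⟨⟨two_pi_nn, le_rfl⟩, hs.trans_eq (cdf_two_pi μ hsupp hmass).symm⟩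

lemma le_cdf_cdfInv (hsupp : μ (Set.Ico 0 (2 * π))ᶜ = 0)
    (hmass : μ Set.univ = ENNReal.ofReal (2 * π)) {s : ℝ} (hs : s ≤ 2 * π) :
    s ≤ cdf μ (cdfInv μ s) := by
  refine le_cdf_of_forall μ fun ε hε => ?_
  have hne : {θ | θ ∈ Icc 0 (2 * π) ∧ s ≤ cdf μ θ}.Nonempty :=
    ⟨2 * π, ⟨two_pi_nn, le_rfl⟩, hs.trans_eq (cdf_two_pi μ hsupp hmass).symm⟩
  obtain ⟨θ, hθ, hlt⟩ := Real.lt_sInf_add_pos hne hε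
  have hlt' : θ < cdfInv μ s + ε := by rw [cdfInv]; exact hlt
  exact le_trans hθ.2 (cdf_mono μ hlt'.le)

lemma cdfInv_le_iff (hsupp : μ (Set.Ico 0 (2 * π))ᶜ = 0)
    (hmass : μ Set.univ = ENNReal.ofReal (2 * π)) {s θ : ℝ} (hs : s ≤ 2 * π)
    (hθ : θ ∈ Icc 0 (2 * π)) : cdfInv μ s ≤ θ ↔ s ≤ cdf μ θ := by
  constructor
  · intro h
    exact le_trans (le_cdf_cdfInv μ hsupp hmass hs) (cdf_mono μ h)
  · intro h
    rw [cdfInv]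
    exact csInf_le ⟨0, fun θ' hθ' => hθ'.1.1⟩ ⟨hθ, h⟩

lemma cdfInv_mono (hsupp : μ (Set.Ico 0 (2 * π))ᶜ = 0)
    (hmass : μ Set.univ = ENNReal.ofReal (2 * π)) {s t : ℝ} (hst : s ≤ t) (ht : t ≤ 2 * π) :
    cdfInv μ s ≤ cdfInv μ t := by
  rw [cdfInv, cdfInv]
  exact csInf_le_csInf ⟨0, fun θ hθ => hθ.1.1⟩
    ⟨2 * π, ⟨two_pi_nn, le_rfl⟩, ht.trans_eq (cdf_two_pi μ hsupp hmass).symm⟩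
    fun θ hθ => ⟨hθ.1, hst.trans hθ.2⟩

lemma cdfInv_eq_zero_of_gt (hmass : μ Set.univ = ENNReal.ofReal (2 * π)) {s : ℝ}
    (hs : 2 * π < s) : cdfInv μ s = 0 := by
  have : {θ | θ ∈ Icc 0 (2 * π) ∧ s ≤ cdf μ θ} = ∅ := by
    ext θ; simp only [mem_setOf_eq, mem_empty_iff_false, iff_false, not_and]
    intro _
    exact not_le.2 (lt_of_le_of_lt (cdf_le μ hmass θ) hs)
  rw [cdfInv, this, Real.sInf_empty]

/-- Monotone extension of `cdfInv`. -/
noncomputable def cdfInv' (s : ℝ) : ℝ := cdfInv μ (min s (2 * π))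

lemma cdfInv'_mono (hsupp : μ (Set.Ico 0 (2 * π))ᶜ = 0)
    (hmass : μ Set.univ = ENNReal.ofReal (2 * π)) : Monotone (cdfInv' μ) := fun s t hst =>
  cdfInv_mono μ hsupp hmass (min_le_min_right _ hst) (min_le_right _ _)

lemma cdfInv'_eq {s : ℝ} (hs : s ≤ 2 * π) : cdfInv' μ s = cdfInv μ s := by
  rw [cdfInv', min_eq_left hs]

lemma measurable_cdfInv (hsupp : μ (Set.Ico 0 (2 * π))ᶜ = 0)
    (hmass : μ Set.univ = ENNReal.ofReal (2 * π)) : Measurable (cdfInv μ) := by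
  have : cdfInv μ = fun s => if s ≤ 2 * π then cdfInv' μ s else 0 := by
    funext s
    split_ifs with h
    · exact (cdfInv'_eq μ h).symm
    · exact cdfInv_eq_zero_of_gt μ hmass (not_le.1 h)
  rw [this]
  exact Measurable.ite measurableSet_Iic
    ((cdfInv'_mono μ hsupp hmass).measurable) measurable_const

/-- The key inverse transform sampling lemma. -/
lemma map_cdfInv (hsupp : μ (Set.Ico 0 (2 * π))ᶜ = 0)
    (hmass : μ Set.univ = ENNReal.ofReal (2 * π)) :
    Measure.map (cdfInv μ) (volume.restrict (Ioc 0 (2 * π))) = μ := by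
  have hmeas := measurable_cdfInv μ hsupp hmass
  have hfin : IsFiniteMeasure (Measure.map (cdfInv μ) (volume.restrict (Ioc 0 (2 * π)))) := by
    constructor
    rw [Measure.map_apply hmeas MeasurableSet.univ]
    simp only [Set.preimage_univ]
    rw [Measure.restrict_apply MeasurableSet.univ, Set.univ_inter]
    exact measure_Ioc_lt_top
  refine Measure.ext_of_Iic _ _ fun θ => ?_
  rw [Measure.map_apply hmeas measurableSet_Iic,
    Measure.restrict_apply (hmeas measurableSet_Iic)]
  rcases lt_or_ge θ 0 with hθ | hθ
  · have h1 : cdfInv μ ⁻¹' Iic θ ∩ Ioc 0 (2 * π) = ∅ := by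
      ext s
      simp only [mem_inter_iff, mem_preimage, mem_Iic, mem_Ioc, mem_empty_iff_false, iff_false,
        not_and, and_imp]
      intro h _ _
      exact absurd (le_trans (cdfInv_nonneg μ hsupp hmass s) h) (not_le.2 hθ)
    have h2 : μ (Iic θ) = 0 := by
      refine measure_mono_null (fun x hx => ?_) hsupp
      simp only [mem_compl_iff, mem_Ico, not_and, not_lt]
      intro h0
      exact absurd (le_trans h0 hx) (not_le.2 hθ)
    rw [h1, h2, measure_empty]
  rcases lt_or_ge θ (2 * π) with hθ2 | hθ2
  · have hset : cdfInv μ ⁻¹' Iic θ ∩ Ioc 0 (2 * π) = Ioc 0 (cdf μ θ) := by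
      ext s
      simp only [mem_inter_iff, mem_preimage, mem_Iic, mem_Ioc]
      constructor
      · rintro ⟨h1, h2, h3⟩
        exact ⟨h2, (cdfInv_le_iff μ hsupp hmass h3 ⟨hθ, hθ2.le⟩).1 h1⟩
      · rintro ⟨h1, h2⟩
        have hs2 : s ≤ 2 * π := h2.trans (cdf_le μ hmass θ)
        exact ⟨(cdfInv_le_iff μ hsupp hmass hs2 ⟨hθ, hθ2.le⟩).2 h2, h1, hs2⟩
    have hIic : μ (Iic θ) = μ (Icc 0 θ) := by
      refine le_antisymm ?_ (measure_mono Icc_subset_Iic_self)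
      calc μ (Iic θ) ≤ μ (Icc 0 θ ∪ (Ico 0 (2 * π))ᶜ) := by
            refine measure_mono fun x hx => ?_
            rcases le_or_gt 0 x with h0 | h0
            · exact Or.inl ⟨h0, hx⟩
            · exact Or.inr (by simp [mem_Ico, not_le.2 h0])
        _ ≤ μ (Icc 0 θ) + μ (Ico 0 (2 * π))ᶜ := measure_union_le _ _
        _ = μ (Icc 0 θ) := by rw [hsupp, add_zero]
    rw [hset, Real.volume_Ioc, sub_zero, hIic, cdf,
      ENNReal.ofReal_toReal (measure_ne_top μ _)]
  · have hset : cdfInv μ ⁻¹' Iic θ ∩ Ioc 0 (2 * π) = Ioc 0 (2 * π) := by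
      refine inter_eq_right.2 fun s hs => ?_
      exact le_trans (cdfInv_le_two_pi μ hsupp hmass hs.2) hθ2
    have hIic : μ (Iic θ) = μ Set.univ := by
      refine le_antisymm (measure_mono (subset_univ _)) ?_
      calc μ Set.univ ≤ μ (Iic θ ∪ (Ico 0 (2 * π))ᶜ) := by
            refine measure_mono fun x _ => ?_
            rcases le_or_gt x θ with h | h
            · exact Or.inl h
            · exact Or.inr (by simp [mem_Ico, not_lt.2 (hθ2.trans h.le)])
        _ ≤ μ (Iic θ) + μ (Ico 0 (2 * π))ᶜ := measure_union_le _ _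
        _ = μ (Iic θ) := by rw [hsupp, add_zero]
    rw [hset, Real.volume_Ioc, sub_zero, hIic, hmass]

end Aux

/-- Surjectivity construction: given μ ∈ M⁺₀(S¹) of mass 2π, the curve
`c(θ) = ∫₀^θ exp(i F_μ^{(-1)}(s)) ds` is a closed Lipschitz curve of unit speed whose
length measure equals μ. -/
theorem stmt10 (μ : Measure ℝ) [IsFiniteMeasure μ]
    (hsupp : μ (Set.Ico 0 (2 * π))ᶜ = 0)
    (hmass : μ Set.univ = ENNReal.ofReal (2 * π))
    (hclosure : ∫ θ, Complex.exp ((θ : ℂ) * Complex.I) ∂μ = 0) :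
    LipschitzWith 1 (curveOf μ) ∧
    curveOf μ (2 * π) = curveOf μ 0 ∧
    (∀ᵐ θ ∂(volume.restrict (Set.Icc 0 (2 * π))), ‖deriv (curveOf μ) θ‖ = 1) ∧
    lengthMeasure (curveOf μ)
      = Measure.map (fun θ : ℝ => Complex.exp ((θ : ℂ) * Complex.I)) μ := by
  set f : ℝ → ℂ := fun s => Complex.exp ((cdfInv μ s : ℂ) * Complex.I) with hf
  have hmeas : Measurable (cdfInv μ) := measurable_cdfInv μ hsupp hmass
  have hfmeas : Measurable f :=
    Complex.measurable_exp.comp ((Complex.measurable_ofReal.comp hmeas).mul_const Complex.I)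
  have hfnorm : ∀ s, ‖f s‖ = 1 := fun s => by
    rw [hf]; exact Complex.norm_exp_ofReal_mul_I _
  have hfint : ∀ a b : ℝ, IntervalIntegrable f volume a b := by
    intro a b
    rw [intervalIntegrable_iff]
    refine Measure.integrableOn_of_bounded (M := 1) measure_Ioc_lt_top.ne
      hfmeas.aestronglyMeasurable ?_
    exact Filter.Eventually.of_forall fun x => (hfnorm x).le
  have hexpmeas : Measurable fun θ : ℝ => Complex.exp ((θ : ℂ) * Complex.I) :=
    Complex.measurable_exp.comp (Complex.measurable_ofReal.mul_const Complex.I)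
  -- Lipschitz
  have hlip : LipschitzWith 1 (curveOf μ) := by
    refine LipschitzWith.of_dist_le_mul fun a b => ?_
    rw [dist_eq_norm]
    have key : curveOf μ a - curveOf μ b = ∫ s in b..a, f s :=
      intervalIntegral.integral_interval_sub_left (hfint 0 a) (hfint 0 b)
    rw [key]
    have hb : ‖∫ s in b..a, f s‖ ≤ 1 * |a - b| :=
      intervalIntegral.norm_integral_le_of_norm_le_const fun x _ => (hfnorm x).le
    simpa [Real.dist_eq] using hb
  -- closed
  have hclosed : curveOf μ (2 * π) = curveOf μ 0 := by
    have h0 : curveOf μ 0 = 0 := intervalIntegral.integral_same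
    rw [h0]
    show (∫ s in (0:ℝ)..(2 * π), f s) = 0
    rw [intervalIntegral.integral_of_le (two_pi_nn)]
    have hmap : (∫ θ, Complex.exp ((θ : ℂ) * Complex.I)
          ∂(Measure.map (cdfInv μ) (volume.restrict (Set.Ioc 0 (2 * π)))))
        = ∫ s in Set.Ioc (0:ℝ) (2 * π), f s :=
      integral_map hmeas.aemeasurable hexpmeas.aestronglyMeasurable
    rw [← hmap, map_cdfInv μ hsupp hmass, hclosure]
  -- derivative a.e.
  have hderiv : ∀ᵐ θ ∂(volume.restrict (Set.Icc 0 (2 * π))), deriv (curveOf μ) θ = f θ := by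
    have hcount : ({x | ¬ContinuousAt (cdfInv' μ) x} ∪ {2 * π} : Set ℝ).Countable :=
      ((cdfInv'_mono μ hsupp hmass).countable_not_continuousAt).union
        (Set.countable_singleton _)
    have hnull : volume ({x | ¬ContinuousAt (cdfInv' μ) x} ∪ {2 * π} : Set ℝ) = 0 :=
      hcount.measure_zero _
    filter_upwards [ae_restrict_of_ae (compl_mem_ae_iff.2 hnull),
      ae_restrict_mem measurableSet_Icc] with θ hθ1 hθ2
    simp only [Set.mem_compl_iff, Set.mem_union, Set.mem_setOf_eq, Set.mem_singleton_iff,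
      not_or, not_not] at hθ1
    obtain ⟨hcont', hne⟩ := hθ1
    have hθlt : θ < 2 * π := lt_of_le_of_ne hθ2.2 hne
    have hgcont : ContinuousAt (cdfInv μ) θ := by
      refine hcont'.congr ?_
      filter_upwards [Iio_mem_nhds hθlt] with x hx
      exact cdfInv'_eq μ (le_of_lt hx)
    have hfcont : ContinuousAt f θ :=
      (Complex.continuous_exp.comp
        (Complex.continuous_ofReal.mul continuous_const)).continuousAt.comp hgcont
    have hd : HasDerivAt (curveOf μ) (f θ) θ :=
      intervalIntegral.integral_hasDerivAt_right (hfint 0 θ)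
        hfmeas.stronglyMeasurable.stronglyMeasurableAtFilter hfcont
    exact hd.deriv
  have hnorm1 : ∀ᵐ θ ∂(volume.restrict (Set.Icc 0 (2 * π))), ‖deriv (curveOf μ) θ‖ = 1 := by
    filter_upwards [hderiv] with θ h
    rw [h]; exact hfnorm θ
  refine ⟨hlip, hclosed, hnorm1, ?_⟩
  -- length measure
  have hwd : (volume.restrict (Set.Icc 0 (2 * π))).withDensity
        (fun θ => ENNReal.ofReal ‖deriv (curveOf μ) θ‖)
      = volume.restrict (Set.Icc 0 (2 * π)) := by
    refine (withDensity_congr_ae (g := 1) ?_).trans withDensity_one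
    filter_upwards [hnorm1] with θ h
    simp [h]
  have hgauss : gaussMap (curveOf μ) =ᵐ[volume.restrict (Set.Icc 0 (2 * π))] f := by
    filter_upwards [hderiv] with θ h
    rw [gaussMap, h, hfnorm θ]
    simp
  rw [lengthMeasure, hwd, Measure.map_congr hgauss,
    ← Measure.restrict_congr_set Ioc_ae_eq_Icc,
    show f = (fun θ : ℝ => Complex.exp ((θ : ℂ) * Complex.I)) ∘ cdfInv μ from rfl,
    ← Measure.map_map hexpmeas hmeas, map_cdfInv μ hsupp hmass]
end

section
/- For a convex positively oriented closed polygon with edge lengths l_i and edge directions α_i satisfying 0 ≤ α₁ < α₂ < … < α_N < 2π, the enclosed (signed) area equals (1/4) Σ_{i=1}^N Σ_{j=1}^N l_i l_j sin|α_i − α_j|. -/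
open MeasureTheory Real

/-- The planar determinant `det(z, w) = z₁w₂ - z₂w₁` of two vectors of `ℝ² ≅ ℂ`. -/
def det2 (z w : ℂ) : ℝ := z.re * w.im - z.im * w.re

lemma det2_sum {ι : Type*} (s : Finset ι) (z : ι → ℂ) (w : ℂ) :
    det2 (∑ j ∈ s, z j) w = ∑ j ∈ s, det2 (z j) w := by
  simp [det2, Complex.re_sum, Complex.im_sum, Finset.sum_mul, Finset.sum_sub_distrib]

lemma det2_exp (a b θ φ : ℝ) :
    det2 ((a : ℂ) * Complex.exp ((θ : ℂ) * Complex.I))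
      ((b : ℂ) * Complex.exp ((φ : ℂ) * Complex.I)) = a * b * Real.sin (φ - θ) := by
  simp [det2, Complex.mul_re, Complex.mul_im, Complex.exp_ofReal_mul_I_re,
    Complex.exp_ofReal_mul_I_im, Real.sin_sub]
  ring

/-- The signed area of a convex positively oriented closed polygon with edges
`e_i = l_i e^{iα_i}`, `0 ≤ α₁ < … < α_N < 2π`, equals `(1/4) Σ_i Σ_j l_i l_j sin|α_i - α_j|`. -/
theorem stmt16 (N : ℕ) (l α : Fin N → ℝ) (hl : ∀ i, 0 < l i)
    (hmono : StrictMono α) (hrange : ∀ i, α i ∈ Set.Ico 0 (2 * π))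
    (hclosed : ∑ i, (l i : ℂ) * Complex.exp ((α i : ℂ) * Complex.I) = 0) :
    (1 / 2) * ∑ i : Fin N,
        det2 (∑ j ∈ Finset.Iio i, (l j : ℂ) * Complex.exp ((α j : ℂ) * Complex.I))
          ((l i : ℂ) * Complex.exp ((α i : ℂ) * Complex.I))
      = (1 / 4) * ∑ i : Fin N, ∑ j : Fin N, l i * l j * Real.sin |α i - α j| := by
  have key : ∀ i : Fin N,
      det2 (∑ j ∈ Finset.Iio i, (l j : ℂ) * Complex.exp ((α j : ℂ) * Complex.I))
        ((l i : ℂ) * Complex.exp ((α i : ℂ) * Complex.I))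
      = ∑ j ∈ Finset.Iio i, l i * l j * Real.sin (α i - α j) := by
    intro i
    rw [det2_sum]
    refine Finset.sum_congr rfl fun j _ => ?_
    rw [det2_exp]; ring
  have split : ∀ i j : Fin N, l i * l j * Real.sin |α i - α j| =
      (if j < i then l i * l j * Real.sin (α i - α j) else 0)
      + (if i < j then l j * l i * Real.sin (α j - α i) else 0) := by
    intro i j
    rcases lt_trichotomy j i with h | h | h
    · rw [if_pos h, if_neg (not_lt.2 h.le),
        abs_of_pos (sub_pos.2 (hmono h))]
      ring
    · subst h; simp
    · rw [if_neg (not_lt.2 h.le), if_pos h, abs_sub_comm,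
        abs_of_pos (sub_pos.2 (hmono h))]
      ring
  have hIio : ∀ i : Fin N, Finset.Iio i = Finset.univ.filter (fun j => j < i) := by
    intro i; ext j; simp
  have hRHS : ∑ i : Fin N, ∑ j : Fin N, l i * l j * Real.sin |α i - α j|
      = 2 * ∑ i : Fin N, ∑ j ∈ Finset.Iio i, l i * l j * Real.sin (α i - α j) := by
    simp only [split, Finset.sum_add_distrib]
    rw [Finset.sum_comm (f := fun i j => if i < j then l j * l i * Real.sin (α j - α i) else 0)]
    simp only [← Finset.sum_filter, ← hIio]
    ring
  rw [hRHS]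
  simp only [key]
  ring
end
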